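/- arXiv:1801.05150 — 6 statements merged into one kernel-verified Lean document; each statement's English description precedes it below -/
import Mathlib

section
/- For posets D and E, the map sending a Scott-continuous function f : I(D) → I(E) to its graph {(a, α) | a a finite antichain of D, α ∈ f(↓a)} is a bijection between Scott-continuous functions from I(D) to I(E) and the initial segments of the poset A_f(D)^op × E. -/
/-!
A Scott-continuous `f` is determined by its values on the finitely generated lower sets `↓a`:
every lower set `S` is the directed union of the `↓a ⊆ S` (directed because the maximal elements
of `a ∪ b` form an antichain generating `↓a ∪ ↓b`), so `x ∈ f S` iff `x ∈ f (↓a)` for some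
`↓a ⊆ S`. Conversely a lower set `G` of `A_f(D)ᵒᵖ × E` defines
`S ↦ {x | ∃ a, ↓a ⊆ S ∧ (a, x) ∈ G}`, which is Scott-continuous since a finite antichain contained
in a directed union is contained in one member; the two constructions are mutually inverse.
-/

def FinAntichain (D : Type*) [PartialOrder D] := {a : Finset D // IsAntichain (· ≤ ·) (a : Set D)}

instance {D : Type*} [PartialOrder D] : Preorder (FinAntichain D) where
  le a b := ∀ α ∈ a.1, ∃ β ∈ b.1, α ≤ β
  le_refl a := fun α h => ⟨α, h, le_refl α⟩
  le_trans a b c hab hbc := fun α hα => by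
    obtain ⟨β, hβ, h1⟩ := hab α hα
    obtain ⟨γ, hγ, h2⟩ := hbc β hβ
    exact ⟨γ, hγ, h1.trans h2⟩

open OrderDual

namespace FinAntichain

variable {D : Type*} [PartialOrder D]

def down (a : FinAntichain D) : LowerSet D := lowerClosure (a.1 : Set D)

lemma down_le_iff {a : FinAntichain D} {S : LowerSet D} : a.down ≤ S ↔ (a.1 : Set D) ⊆ S :=
  lowerClosure_le

lemma down_le_down_iff {a b : FinAntichain D} : a.down ≤ b.down ↔ a ≤ b :=
  down_le_iff

lemma down_mono : Monotone (down : FinAntichain D → LowerSet D) := fun _ _ =>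
  down_le_down_iff.2

open Classical in
noncomputable def maximals (t : Finset D) : FinAntichain D :=
  ⟨t.filter (Maximal (· ∈ t)), (setOfPred_maximal_antichain _).subset fun _ hx => by
    simpa using (Finset.mem_filter.1 hx).2⟩

lemma down_maximals (t : Finset D) : (maximals t).down = lowerClosure (t : Set D) := by
  classical
  refine le_antisymm (lowerClosure_mono fun x hx => (Finset.mem_filter.1 hx).1) ?_
  refine lowerClosure_le.2 fun x hx => ?_
  obtain ⟨y, hxy, hy⟩ := t.exists_le_maximal hx
  exact ⟨y, Finset.mem_filter.2 ⟨hy.prop, hy⟩, hxy⟩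

def downsBelow (S : LowerSet D) : Set (LowerSet D) := down '' {a | a.down ≤ S}

lemma directedOn_downsBelow (S : LowerSet D) : DirectedOn (· ≤ ·) (downsBelow S) := by
  classical
  rintro _ ⟨a, ha, rfl⟩ _ ⟨b, hb, rfl⟩
  have hab : (maximals (a.1 ∪ b.1)).down = a.down ⊔ b.down := by
    rw [down_maximals, Finset.coe_union, lowerClosure_union]; rfl
  exact ⟨_, ⟨_, show _ ≤ S by rw [hab]; exact sup_le ha hb, rfl⟩,
    hab ▸ le_sup_left, hab ▸ le_sup_right⟩

lemma sSup_downsBelow (S : LowerSet D) : sSup (downsBelow S) = S := by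
  refine le_antisymm (sSup_le <| by rintro _ ⟨a, ha, rfl⟩; exact ha) fun x hx => ?_
  have hx' : (maximals {x}).down ∈ downsBelow S :=
    ⟨_, by simpa [down_maximals] using hx, rfl⟩
  exact le_sSup hx' (by simp [down_maximals])

lemma nonempty_downsBelow (S : LowerSet D) : (downsBelow S).Nonempty :=
  ⟨_, maximals ∅, by simp [down_maximals], rfl⟩

end FinAntichain

section Graph

open FinAntichain

variable {D E : Type*} [PartialOrder D] [PartialOrder E]

lemma ScottContinuous.mem_iff_exists_down {f : LowerSet D → LowerSet E} (hf : ScottContinuous f)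
    {S : LowerSet D} {x : E} : x ∈ f S ↔ ∃ a : FinAntichain D, a.down ≤ S ∧ x ∈ f a.down := by
  rw [← sSup_downsBelow S, hf.map_sSup (nonempty_downsBelow S) (directedOn_downsBelow S),
    LowerSet.mem_sSup_iff, sSup_downsBelow]
  simp [downsBelow]

namespace FinAntichain

def graph (f : LowerSet D → LowerSet E) (hf : Monotone f) :
    LowerSet ((FinAntichain D)ᵒᵈ × E) where
  carrier := {p | p.2 ∈ f (ofDual p.1).down}
  lower' _ _ h hp := (f _).lower h.2 (hf (down_mono h.1) hp)

def ofGraph (G : LowerSet ((FinAntichain D)ᵒᵈ × E)) (S : LowerSet D) : LowerSet E where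
  carrier := {x | ∃ a : FinAntichain D, a.down ≤ S ∧ (toDual a, x) ∈ G}
  lower' _ _ h := fun ⟨a, ha, hx⟩ => ⟨a, ha, G.lower (Prod.mk_le_mk.2 ⟨le_rfl, h⟩) hx⟩

variable (G : LowerSet ((FinAntichain D)ᵒᵈ × E))

lemma ofGraph_mono : Monotone (ofGraph G) := fun _ _ hST _ ⟨a, ha, hx⟩ => ⟨a, ha.trans hST, hx⟩

lemma scottContinuous_ofGraph : ScottContinuous (ofGraph G) := by
  refine ScottContinuous.of_map_sSup fun d hne hdir => le_antisymm ?_ ?_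
  · rintro x ⟨a, ha, hx⟩
    have hsub : (a.1 : Set D) ⊆ ⋃ S ∈ d, (S : Set D) := by
      rw [← LowerSet.coe_sSup]; exact down_le_iff.1 ha
    obtain ⟨S, hS, haS⟩ := hdir.exists_mem_subset_of_finset_subset_biUnion hne hsub
    exact LowerSet.mem_sSup_iff.2 ⟨_, ⟨S, hS, rfl⟩, a, down_le_iff.2 haS, hx⟩
  · rw [sSup_image]; exact (ofGraph_mono G).le_map_sSup

lemma graph_ofGraph : graph (ofGraph G) (ofGraph_mono G) = G := by
  ext ⟨a, x⟩
  exact ⟨fun ⟨b, hb, hx⟩ => G.lower (Prod.mk_le_mk.2 ⟨down_le_down_iff.1 hb, le_rfl⟩) hx,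
    fun hx => ⟨ofDual a, le_rfl, hx⟩⟩

lemma ofGraph_graph {f : LowerSet D → LowerSet E} (hf : ScottContinuous f) :
    ofGraph (graph f hf.monotone) = f := by
  ext S x
  exact hf.mem_iff_exists_down.symm

end FinAntichain

end Graph

/-- the map sending a Scott-continuous function `f : I(D) → I(E)` to its graph
`{(a, α) | α ∈ f(↓a)}` is a bijection between Scott-continuous functions from `I(D)` to `I(E)`
and the initial segments (lower sets) of `A_f(D)ᵒᵖ × E`. -/
theorem graph_bijection {D E : Type*} [PartialOrder D] [PartialOrder E] :
    ∃ Φ : {f : LowerSet D → LowerSet E // ScottContinuous f} →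
        LowerSet ((FinAntichain D)ᵒᵈ × E),
      (∀ f, ((Φ f : LowerSet ((FinAntichain D)ᵒᵈ × E)) : Set ((FinAntichain D)ᵒᵈ × E)) =
          {p | p.2 ∈ f.1 (lowerClosure (((OrderDual.ofDual p.1).1 : Finset D) : Set D))}) ∧
      Function.Bijective Φ :=
  ⟨fun f => FinAntichain.graph f.1 f.2.monotone, fun _ => rfl,
    Function.bijective_iff_has_inverse.2
      ⟨fun G => ⟨FinAntichain.ofGraph G, FinAntichain.scottContinuous_ofGraph G⟩,
        fun f => Subtype.ext (FinAntichain.ofGraph_graph f.2), FinAntichain.graph_ofGraph⟩⟩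
end

section
/- The map sending a finite antichain a of a poset D to its downward closure ↓a is an order isomorphism between the poset A_f(D) of finite antichains (with a ≤ b iff ∀α∈a ∃β∈b α≤β) and the poset of compact elements of the complete lattice I(D) of initial segments ordered by inclusion. -/
/-- An element `c` of the complete lattice `I(D)` of initial segments is compact if whenever
`c ≤ ⨆ S` for a nonempty directed family `S`, then `c ≤ s` for some `s ∈ S`. -/
def IsCompactElt {D : Type*} [PartialOrder D] (c : LowerSet D) : Prop :=
  ∀ S : Set (LowerSet D), S.Nonempty → DirectedOn (· ≤ ·) S → c ≤ sSup S → ∃ s ∈ S, c ≤ s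

/-!
The compact elements of the lattice of lower sets are exactly the lower closures of finite sets:
`↓x` is compact and finite joins of compact elements are compact, while a compact `c` lies below
`⨆ x ∈ c, ↓x` and hence below finitely many of the `↓x`. A finite set may be replaced by its
maximal elements without changing its lower closure, and an antichain is recovered from its lower
closure as the set of its maximal elements, so `a ↦ ↓a` is a bijection; it reflects the order
because `↓a ⊆ ↓b` says precisely `a ≤ b`.
-/

open CompleteLattice

theorem isCompactElt_iff_isCompactElement {D : Type*} [PartialOrder D] {c : LowerSet D} :
    IsCompactElt c ↔ IsCompactElement c :=
  (isCompactElement_iff_le_of_directed_sSup_le _ c).symm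

section Preorder

variable {α : Type*} [Preorder α]

theorem LowerSet.isCompactElement_Iic (x : α) : IsCompactElement (LowerSet.Iic x) := by
  rw [isCompactElement_iff_le_of_directed_sSup_le]
  intro S _ _ hxS
  obtain ⟨s, hs, hxs⟩ : ∃ s ∈ S, x ∈ s := by
    simpa using hxS (LowerSet.mem_Iic_iff.2 le_rfl)
  exact ⟨s, hs, LowerSet.Iic_le.2 hxs⟩

theorem lowerClosure_finset_eq_sup (F : Finset α) :
    lowerClosure (F : Set α) = F.sup LowerSet.Iic := by
  ext x
  simp [Finset.sup_eq_iSup]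

theorem isCompactElement_lowerClosure_finset (F : Finset α) :
    IsCompactElement (lowerClosure (F : Set α)) := by
  rw [lowerClosure_finset_eq_sup]
  exact isCompactElement_finsetSup F fun x _ => LowerSet.isCompactElement_Iic x

theorem IsCompactElement.exists_finset_eq_lowerClosure {c : LowerSet α}
    (hc : IsCompactElement c) : ∃ F : Finset α, c = lowerClosure (F : Set α) := by
  obtain ⟨s, hs⟩ := hc.exists_finset_of_le_iSup _ (fun x : c => LowerSet.Iic (x : α))
    fun x hx => LowerSet.mem_iSup_iff.2 ⟨⟨x, hx⟩, LowerSet.mem_Iic_iff.2 le_rfl⟩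
  refine ⟨s.map (Function.Embedding.subtype _), le_antisymm ?_ ?_⟩
  · exact hs.trans <| iSup₂_le fun x hx =>
      LowerSet.Iic_le.2 <| subset_lowerClosure <| Finset.mem_map_of_mem _ hx
  · exact lowerClosure_le.2 fun x hx => by
      obtain ⟨y, -, rfl⟩ := Finset.mem_map.1 hx
      exact y.2

end Preorder

section PartialOrder

variable {α : Type*} [PartialOrder α]

theorem exists_antichain_lowerClosure_eq (F : Finset α) :
    ∃ a : Finset α, IsAntichain (· ≤ ·) (a : Set α) ∧
      lowerClosure (a : Set α) = lowerClosure (F : Set α) := by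
  classical
  refine ⟨F.filter (Maximal (· ∈ F)), ?_, le_antisymm ?_ ?_⟩
  · exact (setOfPred_maximal_antichain _).subset fun x hx => (Finset.mem_filter.1 hx).2
  · exact lowerClosure_mono fun x hx => (Finset.mem_filter.1 hx).1
  · refine lowerClosure_le.2 fun x hx => ?_
    obtain ⟨y, hxy, hy⟩ := F.exists_le_maximal hx
    exact ⟨y, Finset.mem_filter.2 ⟨hy.prop, hy⟩, hxy⟩

theorem IsAntichain.eq_of_lowerClosure_eq {s t : Set α} (hs : IsAntichain (· ≤ ·) s)
    (ht : IsAntichain (· ≤ ·) t) (h : lowerClosure s = lowerClosure t) : s = t := by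
  ext x
  rw [← hs.maximal_mem_lowerClosure_iff_mem, h, ht.maximal_mem_lowerClosure_iff_mem]

end PartialOrder

namespace FinAntichain

variable {D : Type*} [PartialOrder D]

theorem lowerClosure_le_iff {a b : FinAntichain D} :
    lowerClosure (a.1 : Set D) ≤ lowerClosure (b.1 : Set D) ↔ a ≤ b := by
  rw [lowerClosure_le]
  rfl

end FinAntichain

/-- `a ↦ ↓a` is an order isomorphism between the poset `A_f(D)` of finite
antichains and the poset of compact elements of `I(D)`. -/
theorem finAntichain_orderIso_compacts {D : Type*} [PartialOrder D] :
    ∃ e : FinAntichain D ≃o {c : LowerSet D // IsCompactElt c},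
      ∀ a : FinAntichain D,
        (((e a : {c : LowerSet D // IsCompactElt c}) : LowerSet D) : Set D) =
          ((lowerClosure ((a.1 : Finset D) : Set D) : LowerSet D) : Set D) := by
  let f : FinAntichain D → {c : LowerSet D // IsCompactElt c} := fun a =>
    ⟨lowerClosure (a.1 : Set D),
      isCompactElt_iff_isCompactElement.2 (isCompactElement_lowerClosure_finset a.1)⟩
  have hinj : f.Injective := fun a b hab =>
    Subtype.ext <| Finset.coe_injective <| a.2.eq_of_lowerClosure_eq b.2 (congrArg Subtype.val hab)
  have hsurj : f.Surjective := by
    rintro ⟨c, hc⟩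
    obtain ⟨F, rfl⟩ := (isCompactElt_iff_isCompactElement.1 hc).exists_finset_eq_lowerClosure
    obtain ⟨a, ha, haF⟩ := exists_antichain_lowerClosure_eq F
    exact ⟨⟨a, ha⟩, Subtype.ext haF⟩
  exact ⟨⟨Equiv.ofBijective f ⟨hinj, hsurj⟩, FinAntichain.lowerClosure_le_iff⟩, fun _ => rfl⟩
end

section
/- An extensional K-model D is hyperimmune if and only if for every sequence (α_n) in D and every recursive (computable) g : ℕ → ℕ, it is not the case that for all n, unfolding α_n = a_{n,1} → ⋯ → a_{n,g(n)} → α_n' we have α_{n+1} ∈ ⋃_{k ≤ g(n)} a_{n,k}. Prove: the completion of an extensional partial K-model E is hyperimmune if and only if E is hyperimmune. -/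
/-- An extensional (possibly partial) K-model structure on a poset `D`: a partial map `j`
defined on `dom ⊆ (A_f(D)ᵒᵖ × D)` which is an order isomorphism from `dom` onto `D`
(recall `(a, α) ≤ (b, β)` in `A_f(D)ᵒᵖ × D` iff `b ≤ a` and `α ≤ β`). -/
structure PartialKModel (D : Type*) [PartialOrder D] where
  dom : Set (FinAntichain D × D)
  j : FinAntichain D × D → D
  injOn : Set.InjOn j dom
  surj : ∀ α : D, ∃ p ∈ dom, j p = α
  le_iff : ∀ p ∈ dom, ∀ q ∈ dom, (j p ≤ j q ↔ (q.1 ≤ p.1 ∧ p.2 ≤ q.2))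

/-- `Unfolds M α l α'` : `α = a₁ → ⋯ → aₘ → α'` where `l = [a₁, …, aₘ]`, unfolding through the
(partial) isomorphism `j`. -/
inductive PartialKModel.Unfolds {D : Type*} [PartialOrder D] (M : PartialKModel D) :
    D → List (FinAntichain D) → D → Prop
  | nil (α : D) : PartialKModel.Unfolds M α [] α
  | cons {a : FinAntichain D} {β α' : D} {l : List (FinAntichain D)} :
      (a, β) ∈ M.dom → PartialKModel.Unfolds M β l α' →
      PartialKModel.Unfolds M (M.j (a, β)) (a :: l) α'

/-- `BadWitness M α g` : for every `n`, `α n` unfolds as `a_{n,1} → ⋯ → a_{n,g n} → α'` and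
`α (n+1)` belongs to one of the antichains `a_{n,k}`, `k ≤ g n`. -/
def PartialKModel.BadWitness {D : Type*} [PartialOrder D] (M : PartialKModel D)
    (α : ℕ → D) (g : ℕ → ℕ) : Prop :=
  ∀ n : ℕ, ∃ (l : List (FinAntichain D)) (α' : D),
    l.length = g n ∧ M.Unfolds (α n) l α' ∧ ∃ a ∈ l, α (n + 1) ∈ a.1

/-- Hyperimmunity: no sequence `(α_n)` and recursive `g` satisfy the bad-witness condition. -/
def PartialKModel.Hyperimmune {D : Type*} [PartialOrder D] (M : PartialKModel D) : Prop :=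
  ¬ ∃ (α : ℕ → D) (g : ℕ → ℕ), Computable g ∧ M.BadWitness α g

/-- The increasing approximations of a completion: `strata N B 0 = B` and
`strata N B (n+1)` adds all `j(a, β)` with `a` and `β` from `strata N B n`. -/
def PartialKModel.strata {D : Type*} [PartialOrder D] (N : PartialKModel D) (B : Set D) :
    ℕ → Set D
  | 0 => B
  | n + 1 => N.strata B n ∪
      {x | ∃ (a : FinAntichain D) (β : D),
        ((a.1 : Finset D) : Set D) ⊆ N.strata B n ∧ β ∈ N.strata B n ∧ N.j (a, β) = x}

/-- `IsCompletion M N ι` : the total K-model `N` on `D̄`, together with the order-embedding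
`ι : E → D̄`, is the completion of the partial K-model `M` on `E`: `N` is total, `ι` preserves
and reflects the order, `ι` transports `j_M` to `j_N` (the antichain being transported
pointwise), and every element of `D̄` appears in some stratum of the completion over the image
of `E`. -/
def IsCompletion {E DD : Type*} [PartialOrder E] [PartialOrder DD]
    (M : PartialKModel E) (N : PartialKModel DD) (ι : E → DD) : Prop :=
  N.dom = Set.univ ∧
  (∀ x y : E, ι x ≤ ι y ↔ x ≤ y) ∧
  (∀ p ∈ M.dom, ∃ b : FinAntichain DD,
      ((b.1 : Finset DD) : Set DD) = ι '' ((p.1.1 : Finset E) : Set E) ∧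
      N.j (b, ι p.2) = ι (M.j p)) ∧
  (∀ x : DD, ∃ n : ℕ, x ∈ N.strata (Set.range ι) n)

/-
A bad witness in `E` is pushed along `ι` to a bad witness in `D̄`. Conversely, unfolding an element
of stratum `n + 1` only produces antichains of stratum `n`, and the image of `E` is closed under
unfolding; so a bad witness `(α_n)` in `D̄` with `α_0` in stratum `r` lies in the image of `E` from
index `r` on, where it pulls back to a bad witness in `E` for the computable bound `g (r + ·)`.
-/

namespace FinAntichain

variable {D D' : Type*} [PartialOrder D] [PartialOrder D']

def map (f : D ↪o D') (a : FinAntichain D) : FinAntichain D' :=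
  ⟨a.1.map f.toEmbedding, by
    rw [Finset.coe_map]
    exact a.2.image_embedding f⟩

theorem mem_map {f : D ↪o D'} {a : FinAntichain D} {z : D'} :
    z ∈ (a.map f).1 ↔ ∃ x ∈ a.1, f x = z :=
  Finset.mem_map

theorem apply_mem_map {f : D ↪o D'} {a : FinAntichain D} {x : D} :
    f x ∈ (a.map f).1 ↔ x ∈ a.1 :=
  Finset.mem_map' f.toEmbedding

theorem eq_map_of_coe_eq {f : D ↪o D'} {a : FinAntichain D} {b : FinAntichain D'}
    (h : ((b.1 : Finset D') : Set D') = f '' ((a.1 : Finset D) : Set D)) : b = a.map f :=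
  Subtype.ext <| Finset.coe_injective <| by rw [h, map, Finset.coe_map]; rfl

end FinAntichain

namespace PartialKModel

section Hom

variable {D D' : Type*} [PartialOrder D] [PartialOrder D']

def IsHom (M : PartialKModel D) (N : PartialKModel D') (f : D ↪o D') : Prop :=
  ∀ p ∈ M.dom, (p.1.map f, f p.2) ∈ N.dom ∧ N.j (p.1.map f, f p.2) = f (M.j p)

variable {M : PartialKModel D} {N : PartialKModel D'} {f : D ↪o D'}

theorem IsHom.eq_map_of_j_eq (hf : M.IsHom N f) {p : FinAntichain D' × D'} (hp : p ∈ N.dom)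
    {y : D} (hy : N.j p = f y) : ∃ q ∈ M.dom, M.j q = y ∧ p = (q.1.map f, f q.2) := by
  obtain ⟨q, hq, rfl⟩ := M.surj y
  refine ⟨q, hq, rfl, N.injOn hp (hf q hq).1 ?_⟩
  rw [hy, (hf q hq).2]

theorem Unfolds.map (hf : M.IsHom N f) {β β' : D} {l : List (FinAntichain D)}
    (hu : M.Unfolds β l β') : N.Unfolds (f β) (l.map (FinAntichain.map f)) (f β') := by
  induction hu with
  | nil => exact .nil _
  | cons hp _ ih =>
    rw [← (hf _ hp).2]
    exact .cons (hf _ hp).1 ih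

theorem Unfolds.exists_of_map (hf : M.IsHom N f) {y : D} {x' : D'} {l : List (FinAntichain D')}
    (hu : N.Unfolds (f y) l x') :
    ∃ (l' : List (FinAntichain D)) (y' : D),
      M.Unfolds y l' y' ∧ l = l'.map (FinAntichain.map f) ∧ x' = f y' := by
  generalize hx : f y = x at hu
  induction hu generalizing y with
  | nil => exact ⟨[], y, .nil y, rfl, hx.symm⟩
  | cons hp _ ih =>
    obtain ⟨q, hq, rfl, hpq⟩ := hf.eq_map_of_j_eq hp hx.symm
    obtain ⟨rfl, rfl⟩ := Prod.ext_iff.mp hpq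
    obtain ⟨l', y', hu', rfl, rfl⟩ := ih rfl
    exact ⟨q.1 :: l', y', .cons hq hu', rfl, rfl⟩

theorem BadWitness.map (hf : M.IsHom N f) {α : ℕ → D} {g : ℕ → ℕ} (hw : M.BadWitness α g) :
    N.BadWitness (f ∘ α) g := fun n => by
  obtain ⟨l, α', hlen, hu, a, ha, hmem⟩ := hw n
  exact ⟨_, _, (List.length_map _).trans hlen, hu.map hf,
    a.map f, List.mem_map_of_mem ha, FinAntichain.apply_mem_map.mpr hmem⟩

theorem BadWitness.of_map (hf : M.IsHom N f) {β : ℕ → D} {g : ℕ → ℕ}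
    (hw : N.BadWitness (f ∘ β) g) : M.BadWitness β g := fun n => by
  obtain ⟨l, x', hlen, hu, a, ha, hmem⟩ := hw n
  obtain ⟨l', y', hu', rfl, -⟩ := hu.exists_of_map hf
  obtain ⟨a', ha', rfl⟩ := List.mem_map.mp ha
  exact ⟨l', y', (List.length_map _).symm.trans hlen, hu', a', ha',
    FinAntichain.apply_mem_map.mp hmem⟩

end Hom

section Strata

variable {D : Type*} [PartialOrder D] {N : PartialKModel D}

theorem injective_j_of_dom_eq_univ (hN : N.dom = Set.univ) : Function.Injective N.j :=
  fun p q => N.injOn (hN ▸ Set.mem_univ p) (hN ▸ Set.mem_univ q)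

def IsSubtermClosed (N : PartialKModel D) (C : Set D) : Prop :=
  ∀ p ∈ N.dom, N.j p ∈ C → ((p.1.1 : Finset D) : Set D) ⊆ C ∧ p.2 ∈ C

theorem IsHom.isSubtermClosed_range {D' : Type*} [PartialOrder D'] {M : PartialKModel D'}
    {f : D' ↪o D} (hf : M.IsHom N f) : N.IsSubtermClosed (Set.range f) := by
  rintro p hp ⟨y, hy⟩
  obtain ⟨q, -, -, rfl⟩ := hf.eq_map_of_j_eq hp hy.symm
  refine ⟨fun z hz => ?_, Set.mem_range_self _⟩
  obtain ⟨x, -, rfl⟩ := FinAntichain.mem_map.mp hz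
  exact Set.mem_range_self x

theorem Unfolds.subset_of_isSubtermClosed {C : Set D} (hC : N.IsSubtermClosed C)
    {x x' : D} {l : List (FinAntichain D)} (hx : x ∈ C) (hu : N.Unfolds x l x') :
    ∀ a ∈ l, ((a.1 : Finset D) : Set D) ⊆ C := by
  induction hu with
  | nil => simp
  | cons hp _ ih =>
    obtain ⟨ha, hβ⟩ := hC _ hp hx
    exact List.forall_mem_cons.mpr ⟨ha, ih hβ⟩

theorem strata_subset_succ (B : Set D) (n : ℕ) : N.strata B n ⊆ N.strata B (n + 1) :=
  Set.subset_union_left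

variable {B : Set D}

theorem components_mem_strata_of_j_mem_strata_succ (hj : Function.Injective N.j) {n : ℕ}
    (hn : N.IsSubtermClosed (N.strata B n)) {p : FinAntichain D × D} (hp : p ∈ N.dom)
    (hx : N.j p ∈ N.strata B (n + 1)) :
    ((p.1.1 : Finset D) : Set D) ⊆ N.strata B n ∧ p.2 ∈ N.strata B n := by
  rcases hx with hx | ⟨a, β, ha, hβ, he⟩
  · exact hn p hp hx
  · obtain rfl := hj he
    exact ⟨ha, hβ⟩

theorem isSubtermClosed_strata (hj : Function.Injective N.j) (hB : N.IsSubtermClosed B)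
    (n : ℕ) : N.IsSubtermClosed (N.strata B n) := by
  induction n with
  | zero => exact hB
  | succ n ih =>
    intro p hp hx
    obtain ⟨ha, hβ⟩ := components_mem_strata_of_j_mem_strata_succ hj ih hp hx
    exact ⟨ha.trans (strata_subset_succ B n), strata_subset_succ B n hβ⟩

theorem Unfolds.subset_strata_of_mem_strata_succ (hj : Function.Injective N.j)
    (hB : N.IsSubtermClosed B) {n : ℕ} {x x' : D} {l : List (FinAntichain D)}
    (hx : x ∈ N.strata B (n + 1)) (hu : N.Unfolds x l x') :
    ∀ a ∈ l, ((a.1 : Finset D) : Set D) ⊆ N.strata B n := by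
  cases hu with
  | nil => simp
  | cons hp hu' =>
    have hn := isSubtermClosed_strata hj hB n
    obtain ⟨ha, hβ⟩ := components_mem_strata_of_j_mem_strata_succ hj hn hp hx
    exact List.forall_mem_cons.mpr ⟨ha, hu'.subset_of_isSubtermClosed hn hβ⟩

theorem BadWitness.comp_add {α : ℕ → D} {g : ℕ → ℕ} (hw : N.BadWitness α g) (r : ℕ) :
    N.BadWitness (fun m => α (r + m)) (fun m => g (r + m)) :=
  fun m => hw (r + m)

theorem BadWitness.succ_mem_of_isSubtermClosed {C : Set D} (hC : N.IsSubtermClosed C)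
    {α : ℕ → D} {g : ℕ → ℕ} (hw : N.BadWitness α g) {k : ℕ} (hk : α k ∈ C) :
    α (k + 1) ∈ C := by
  obtain ⟨l, α', -, hu, a, ha, hmem⟩ := hw k
  exact hu.subset_of_isSubtermClosed hC hk a ha hmem

theorem BadWitness.add_mem_of_isSubtermClosed {C : Set D} (hC : N.IsSubtermClosed C)
    {α : ℕ → D} {g : ℕ → ℕ} (hw : N.BadWitness α g) {k : ℕ} (hk : α k ∈ C) (m : ℕ) :
    α (k + m) ∈ C := by
  induction m with
  | zero => exact hk
  | succ m ih => exact hw.succ_mem_of_isSubtermClosed hC ih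

theorem BadWitness.add_mem_of_mem_strata (hj : Function.Injective N.j)
    (hB : N.IsSubtermClosed B) {α : ℕ → D} {g : ℕ → ℕ} (hw : N.BadWitness α g) {n k : ℕ}
    (hk : α k ∈ N.strata B n) : α (k + n) ∈ B := by
  induction n generalizing k with
  | zero => exact hk
  | succ n ih =>
    obtain ⟨l, α', -, hu, a, ha, hmem⟩ := hw k
    rw [← Nat.add_assoc, Nat.add_right_comm]
    exact ih (hu.subset_strata_of_mem_strata_succ hj hB hk a ha hmem)

end Strata

end PartialKModel

namespace IsCompletion

variable {E DD : Type*} [PartialOrder E] [PartialOrder DD]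
  {M : PartialKModel E} {N : PartialKModel DD} {ι : E → DD}

def embedding (h : IsCompletion M N ι) : E ↪o DD :=
  OrderEmbedding.ofMapLEIff ι h.2.1

theorem isHom (h : IsCompletion M N ι) : M.IsHom N h.embedding := fun p hp => by
  obtain ⟨b, hb, hj⟩ := h.2.2.1 p hp
  rw [← FinAntichain.eq_map_of_coe_eq hb]
  exact ⟨h.1 ▸ Set.mem_univ _, hj⟩

end IsCompletion

/-- the completion of an extensional partial K-model `E` is hyperimmune if and
only if `E` is hyperimmune. -/
theorem completion_hyperimmune_iff {E DD : Type*} [PartialOrder E] [PartialOrder DD]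
    (M : PartialKModel E) (N : PartialKModel DD) (ι : E → DD)
    (h : IsCompletion M N ι) :
    N.Hyperimmune ↔ M.Hyperimmune := by
  have hf := h.isHom
  constructor
  · rintro hN ⟨α, g, hg, hw⟩
    exact hN ⟨_, g, hg, hw.map hf⟩
  · rintro hM ⟨α, g, hg, hw⟩
    obtain ⟨r, hr⟩ := h.2.2.2 (α 0)
    have hB : N.IsSubtermClosed (Set.range ι) := hf.isSubtermClosed_range
    have hj := PartialKModel.injective_j_of_dom_eq_univ h.1
    have hα : ∀ m, α (r + m) ∈ Set.range ι :=
      hw.add_mem_of_isSubtermClosed hB (by simpa using hw.add_mem_of_mem_strata hj hB hr)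
    choose β hβ using hα
    have hg' : Computable fun m => g (r + m) :=
      hg.comp (Primrec.nat_add.comp (Primrec.const r) Primrec.id).to_comp
    have hw' := hw.comp_add r
    rw [← show h.embedding ∘ β = fun m => α (r + m) from funext hβ] at hw'
    exact hM ⟨β, _, hg', hw'.of_map hf⟩
end

section
/- Scott's D_∞ K-model, whose elements are generated by the grammar α ::= * | a → α (with a a finite antichain, and a → α satisfying that * is the only element with empty antecedent, i.e. ∅ → * is identified with *), is hyperimmune: there is no sequence (α_n) in D_∞ and no function g : ℕ → ℕ (recursive or not) such that for all n, α_n = a_{n,1} → ⋯ → a_{n,g(n)} → α_n' and α_{n+1} ∈ ⋃_{k ≤ g(n)} a_{n,k}. -/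
/-!
Unfold every element of `D_∞` through the total isomorphism `j`. An antecedent occurring in the
unfolding of an element of stratum `r + 1` lies in stratum `r`, because `j` is injective; and
`* = ∅ → *` has only empty antecedents. Hence the relation "γ occurs in an antecedent of the
unfolding of x" is well founded, while a bad witness would be an infinite descending chain for it.
-/

namespace PartialKModel

variable {D : Type*} [PartialOrder D] (N : PartialKModel D)

def OccursIn (γ x : D) : Prop :=
  ∃ (l : List (FinAntichain D)) (α' : D), N.Unfolds x l α' ∧ ∃ a ∈ l, γ ∈ a.1

variable {N}

theorem BadWitness.occursIn_succ {α : ℕ → D} {g : ℕ → ℕ} (h : N.BadWitness α g) (n : ℕ) :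
    N.OccursIn (α (n + 1)) (α n) := by
  obtain ⟨l, α', -, hu, ha⟩ := h n
  exact ⟨l, α', hu, ha⟩

theorem Unfolds.eq_of_mem_of_j_eq_self {b : FinAntichain D} {x α' : D}
    {l : List (FinAntichain D)} (hu : N.Unfolds x l α') (hb : (b, x) ∈ N.dom)
    (hfix : N.j (b, x) = x) : ∀ a ∈ l, a = b := by
  induction hu with
  | nil => simp
  | @cons a β α' l hd _ ih =>
    obtain ⟨rfl, hβ⟩ := Prod.mk.inj (N.injOn hd hb hfix.symm)
    rw [← hβ] at hb hfix
    simpa using ih hb hfix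

theorem not_occursIn_of_j_eq_self {b : FinAntichain D} {x : D} (hb : (b, x) ∈ N.dom)
    (hempty : b.1 = ∅) (hfix : N.j (b, x) = x) (γ : D) : ¬ N.OccursIn γ x := by
  rintro ⟨l, α', hu, a, ha, hγ⟩
  rw [hu.eq_of_mem_of_j_eq_self hb hfix a ha, hempty] at hγ
  exact Finset.notMem_empty γ hγ

theorem occursIn_j {a : FinAntichain D} {β γ : D} (hp : (a, β) ∈ N.dom)
    (h : N.OccursIn γ (N.j (a, β))) : γ ∈ a.1 ∨ N.OccursIn γ β := by
  obtain ⟨l, α', hu, a', ha', hγ⟩ := h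
  generalize hx : N.j (a, β) = x at hu
  cases hu with
  | nil => simp at ha'
  | @cons a₀ β₀ _ l hd hu =>
    obtain ⟨rfl, rfl⟩ := Prod.mk.inj (N.injOn hd hp hx.symm)
    rcases List.mem_cons.mp ha' with rfl | ha'
    · exact Or.inl hγ
    · exact Or.inr ⟨l, α', hu, a', ha', hγ⟩

theorem acc_occursIn_of_mem_strata (hdom : N.dom = Set.univ) {B : Set D}
    (hB : ∀ x ∈ B, ∀ γ, ¬ N.OccursIn γ x) :
    ∀ (r : ℕ), ∀ x ∈ N.strata B r, Acc N.OccursIn x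
  | 0, x, hx => ⟨_, fun γ hγ => (hB x hx γ hγ).elim⟩
  | r + 1, x, .inl hx => acc_occursIn_of_mem_strata hdom hB r x hx
  | r + 1, _, .inr ⟨a, β, ha, hβ, hx⟩ => by
    subst hx
    refine ⟨_, fun γ hγ => ?_⟩
    rcases occursIn_j (hdom ▸ Set.mem_univ _) hγ with hγ | hγ
    · exact acc_occursIn_of_mem_strata hdom hB r γ (ha hγ)
    · exact (acc_occursIn_of_mem_strata hdom hB r β hβ).inv hγ

theorem wellFounded_occursIn (hdom : N.dom = Set.univ) {B : Set D}
    (hB : ∀ x ∈ B, ∀ γ, ¬ N.OccursIn γ x) (hcover : ∀ x, ∃ r, x ∈ N.strata B r) :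
    WellFounded N.OccursIn :=
  ⟨fun x => (hcover x).elim fun r hx => acc_occursIn_of_mem_strata hdom hB r x hx⟩

end PartialKModel

theorem IsCompletion.exists_j_eq_self {DD : Type*} [PartialOrder DD] {M : PartialKModel PUnit}
    (hdom : M.dom = {p | p.1.1 = (∅ : Finset PUnit)}) {N : PartialKModel DD}
    {ι : PUnit → DD} (h : IsCompletion M N ι) :
    ∃ b : FinAntichain DD, b.1 = ∅ ∧ N.j (b, ι PUnit.unit) = ι PUnit.unit := by
  obtain ⟨p, hp, -⟩ := M.surj PUnit.unit
  obtain ⟨b, hb, hjb⟩ := h.2.2.1 p hp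
  rw [hdom, Set.mem_ofPred_eq] at hp
  rw [hp, Finset.coe_empty, Set.image_empty, Finset.coe_eq_empty] at hb
  exact ⟨b, hb, hjb⟩

/-- Scott's `D_∞`, the completion of the one-point partial K-model `({*}, j)`
with `j(∅, *) = *`, is hyperimmune in the strong sense: there is no sequence `(α_n)` in `D_∞`
and no function `g : ℕ → ℕ` whatsoever (recursive or not) witnessing the failure of
hyperimmunity. -/
theorem scott_Dinf_hyperimmune {DD : Type*} [PartialOrder DD]
    (M : PartialKModel PUnit) (hdom : M.dom = {p | p.1.1 = (∅ : Finset PUnit)})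
    (N : PartialKModel DD) (ι : PUnit → DD) (h : IsCompletion M N ι) :
    ¬ ∃ (α : ℕ → DD) (g : ℕ → ℕ), N.BadWitness α g := by
  rintro ⟨α, g, hbad⟩
  obtain ⟨b, hempty, hfix⟩ := h.exists_j_eq_self hdom
  obtain ⟨hNdom, -, -, hcover⟩ := h
  have hbase : ∀ x ∈ Set.range ι, ∀ γ, ¬ N.OccursIn γ x := by
    rintro _ ⟨⟨⟩, rfl⟩
    exact PartialKModel.not_occursIn_of_j_eq_self (hNdom ▸ Set.mem_univ _) hempty hfix
  exact (wellFounded_iff_isEmpty_descending_chain.mp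
    (PartialKModel.wellFounded_occursIn hNdom hbase hcover)).false ⟨α, hbad.occursIn_succ⟩
end

section
/- The inductive completion model ω̄, i.e., the extensional completion of the partial K-model with underlying set ℕ (discretely ordered) and j({k | k < n}, n) = n for each n, is hyperimmune: already in the partial model, any sequence (α_n) ∈ ℕ^ℕ satisfying the hyperimmunity-failure condition for some g would satisfy α_{n+1} < α_n for all n, contradicting well-foundedness of ℕ. -/
/-- `ℕ` with the discrete (identity) order. -/
def DiscNat := ℕ

instance : PartialOrder DiscNat where
  le a b := a = b
  le_refl _ := rfl
  le_trans _ _ _ h1 h2 := Eq.trans h1 h2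
  le_antisymm _ _ h _ := h

def DiscNat.toNat (k : DiscNat) : ℕ := k

/-- the partial K-model underlying the inductive completion `ω̄`, with carrier `ℕ`
discretely ordered and `j({k | k < n}, n) = n`, is hyperimmune (whence so is its completion,
by the transfer result). -/
theorem omegabar_hyperimmune
    (M : PartialKModel DiscNat)
    (hdom : ∀ p : FinAntichain DiscNat × DiscNat,
      p ∈ M.dom ↔ (∀ k : DiscNat, k ∈ p.1.1 ↔ k.toNat < p.2.toNat))
    (hj : ∀ p ∈ M.dom, M.j p = p.2) :
    M.Hyperimmune := by

  intro ⟨α, g, _, hbad⟩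
  have key : ∀ n, (α (n+1)).toNat < (α n).toNat := by
    intro n
    obtain ⟨l, α', _, hunf, a, hal, hmem⟩ := hbad n
    -- show from unfolding: any element of any antichain in l is < α n
    have H : ∀ (γ : DiscNat) (l : List (FinAntichain DiscNat)) (α' : DiscNat),
        M.Unfolds γ l α' → ∀ a ∈ l, ∀ x ∈ a.1, DiscNat.toNat x < DiscNat.toNat γ := by
      intro γ l α' h
      induction h with
      | nil => intro a ha; simp at ha
      | @cons a0 β α' l hd hu ih =>
        intro a ha x hx
        rw [hj _ hd]
        rcases List.mem_cons.mp ha with rfl | ha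
        · exact ((hdom _).mp hd x).mp hx
        · exact ih a ha x hx
    exact H _ _ _ hunf a hal _ hmem
  have h : ∀ n, (α n).toNat + n ≤ (α 0).toNat := by
    intro n
    induction n with
    | zero => simp
    | succ n ih => have := key n; omega
  have := h ((α 0).toNat + 1)
  omega
end

section
/- The co-inductive completion model ℤ̄, the extensional completion of the partial K-model with underlying set ℤ (discretely ordered) and j({n}, n+1) = n+1, is not hyperimmune: the sequence α_n = −n with the recursive function g(n) = 1 witnesses the failure. -/
/-- `ℤ` with the discrete (identity) order. -/
def DiscInt := ℤ

instance : PartialOrder DiscInt where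
  le a b := a = b
  le_refl _ := rfl
  le_trans _ _ _ h1 h2 := Eq.trans h1 h2
  le_antisymm _ _ h _ := h

def DiscInt.toInt (k : DiscInt) : ℤ := k

def DiscInt.ofInt (k : ℤ) : DiscInt := k

def FinAntichain.singleton {D : Type*} [PartialOrder D] (x : D) : FinAntichain D :=
  ⟨{x}, by rw [Finset.coe_singleton]; exact Set.subsingleton_singleton.isAntichain _⟩

@[simp]
theorem FinAntichain.mem_singleton {D : Type*} [PartialOrder D] {x y : D} :
    y ∈ (FinAntichain.singleton x).1 ↔ y = x :=
  Finset.mem_singleton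

namespace PartialKModel

variable {D : Type*} [PartialOrder D] (M : PartialKModel D)

theorem Unfolds.single {a : FinAntichain D} {β : D} (h : (a, β) ∈ M.dom) :
    M.Unfolds (M.j (a, β)) [a] β :=
  .cons h (.nil β)

theorem badWitness_one {α : ℕ → D}
    (h : ∀ n, ∃ (a : FinAntichain D) (β : D),
      (a, β) ∈ M.dom ∧ M.j (a, β) = α n ∧ α (n + 1) ∈ a.1) :
    M.BadWitness α (fun _ => 1) := by
  intro n
  obtain ⟨a, β, hdom, hj, hmem⟩ := h n
  exact ⟨[a], β, rfl, hj ▸ Unfolds.single M hdom, a, List.mem_singleton_self a, hmem⟩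

theorem not_hyperimmune_of_badWitness {α : ℕ → D} {g : ℕ → ℕ} (hg : Computable g)
    (h : M.BadWitness α g) : ¬ M.Hyperimmune :=
  fun hM => hM ⟨α, g, hg, h⟩

end PartialKModel

/-- the partial K-model underlying the co-inductive completion `ℤ̄`, with carrier
`ℤ` discretely ordered and `j({n}, n+1) = n+1` (so each `m` unfolds as `{m−1} → m`), is not
hyperimmune: the sequence `α_n = −n` with the recursive function `g(n) = 1` witnesses the
failure. -/
theorem intbar_not_hyperimmune
    (M : PartialKModel DiscInt)
    (hdom : ∀ p : FinAntichain DiscInt × DiscInt,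
      p ∈ M.dom ↔ (∀ k : DiscInt, k ∈ p.1.1 ↔ k.toInt = p.2.toInt - 1))
    (hj : ∀ p ∈ M.dom, M.j p = p.2) :
    (M.BadWitness (fun n => DiscInt.ofInt (-(n : ℤ))) (fun _ => 1) ∧
      Computable (fun _ : ℕ => (1 : ℕ))) ∧
    ¬ M.Hyperimmune := by
  have hbad : M.BadWitness (fun n => DiscInt.ofInt (-(n : ℤ))) (fun _ => 1) := by
    refine M.badWitness_one fun n => ?_
    -- `-n` unfolds as `{-n - 1} → -n`, and `-n - 1` is the next term of the sequence.
    let a := FinAntichain.singleton (DiscInt.ofInt (-(n : ℤ) - 1))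
    have hmem : (a, DiscInt.ofInt (-(n : ℤ))) ∈ M.dom :=
      (hdom _).2 fun _ => FinAntichain.mem_singleton
    refine ⟨a, _, hmem, hj _ hmem, ?_⟩
    rw [FinAntichain.mem_singleton]
    change -((n + 1 : ℕ) : ℤ) = -(n : ℤ) - 1
    omega
  exact ⟨⟨hbad, Computable.const 1⟩, M.not_hyperimmune_of_badWitness (Computable.const 1) hbad⟩
end
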